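/- arXiv:1001.1775 — 3 statements merged into one kernel-verified Lean document; each statement's English description precedes it below -/
import Mathlib

section
/- Let f be continuous on the closed unit disk and holomorphic on the open unit disk, with f^#(ξ) = ∫_{−1/2}^{1/2} f(e^{2πix}) e^{−2πixξ} dx. Then for 0 < α < 2 and 0 < λ < 1: α · Σ_{j=−∞}^{−1} f^#(αj) λ^{−αj} = (α λ^α sin(απ)/π) · ∫₀¹ t^{α−1} f(−t) / |e^{−iαπ} − (λt)^α|² dt. -/
/-!
For `β > 0`, both `f^#(-β)` and `(sin βπ / π) ∫₀¹ t^{β-1} f(-t) dt` are limits as `r → 1⁻` of the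
same expressions for `f (r ·)`. For `r < 1` expand `f` in its Taylor series `∑ aₙ zⁿ`: the two sides
agree term by term, since `∫_{-1/2}^{1/2} e^{2πix(n+β)} dx = (-1)ⁿ sin(βπ) / (π(n+β))` and
`∫₀¹ t^{β-1} (-t)ⁿ dt = (-1)ⁿ / (n+β)`. Taking `β = α(k+1)` and summing against `λ^{α(k+1)}`
turns the series into an integral against the kernel
`∑ₖ wᵏ sin((k+1)απ) = sin(απ) / |e^{-iαπ} - w|²`, `w = (λt)^α`, which is the imaginary part of a
geometric series.
-/

/-- The fractional Fourier coefficient `f^#(ξ) = ∫_{-1/2}^{1/2} f(e^{2πix}) e^{-2πixξ} dx`. -/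
noncomputable def fsharp (f : ℂ → ℂ) (ξ : ℝ) : ℂ :=
  ∫ x in (-(1/2) : ℝ)..(1/2),
    f (Complex.exp (2 * Real.pi * Complex.I * x)) *
      Complex.exp (-(2 * Real.pi * Complex.I * x * ξ))

open Complex Filter MeasureTheory Set Metric Topology
open scoped Real NNReal ENNReal Interval

theorem HasFPowerSeriesOnBall.hasSum_intervalIntegral_mul_pow {f : ℂ → ℂ}
    {p : FormalMultilinearSeries ℂ ℂ ℂ} {R : ℝ≥0∞} (hp : HasFPowerSeriesOnBall f p 0 R)
    {g z : ℝ → ℂ} {a b : ℝ} {r : ℝ≥0} (hr : (r : ℝ≥0∞) < R)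
    (hg : IntervalIntegrable g volume a b) (hz : Continuous z) (hzr : ∀ x ∈ Ι a b, ‖z x‖ ≤ r) :
    HasSum (fun n => p.coeff n * ∫ x in a..b, g x * z x ^ n) (∫ x in a..b, g x * f (z x)) := by
  have hsum : Summable fun n => ‖p.coeff n‖ * (r : ℝ) ^ n := by
    simpa only [FormalMultilinearSeries.norm_apply_eq_norm_coef]
      using p.summable_norm_mul_pow (hr.trans_le hp.r_le)
  simp_rw [← intervalIntegral.integral_const_mul]
  refine intervalIntegral.hasSum_integral_of_dominated_convergence
    (fun n x => ‖p.coeff n‖ * r ^ n * ‖g x‖) (fun n => ?_) (fun n => ?_)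
    (ae_of_all _ fun x _ => hsum.mul_right _) ?_ (ae_of_all _ fun x hx => ?_)
  · exact aestronglyMeasurable_const.mul
      (hg.def'.aestronglyMeasurable.mul (hz.pow n).aestronglyMeasurable)
  · refine ae_of_all _ fun x hx => ?_
    calc ‖p.coeff n * (g x * z x ^ n)‖ = ‖p.coeff n‖ * ‖g x‖ * ‖z x‖ ^ n := by
          rw [norm_mul, norm_mul, norm_pow, mul_assoc]
      _ ≤ ‖p.coeff n‖ * ‖g x‖ * r ^ n := by gcongr; exact hzr x hx
      _ = ‖p.coeff n‖ * r ^ n * ‖g x‖ := mul_right_comm _ _ _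
  · simp_rw [tsum_mul_right]
    exact hg.norm.const_mul _
  · have hx' : z x ∈ eball (0 : ℂ) R := by
      rw [mem_eball, edist_zero_right]
      exact lt_of_le_of_lt (by exact_mod_cast hzr x hx) hr
    have := (hp.hasSum (y := z x) hx').mul_left (g x)
    simpa only [zero_add, FormalMultilinearSeries.apply_eq_pow_smul_coeff, smul_eq_mul,
      mul_left_comm (g x), mul_comm (z x ^ _)] using this

theorem tendsto_intervalIntegral_mul_comp_ofReal_mul {f : ℂ → ℂ}
    (hf : ContinuousOn f (closedBall 0 1)) {g z : ℝ → ℂ} {a b : ℝ}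
    (hg : IntervalIntegrable g volume a b) (hz : Continuous z) (hz1 : ∀ x ∈ Ι a b, ‖z x‖ ≤ 1) :
    Tendsto (fun r : ℝ => ∫ x in a..b, g x * f (r * z x)) (𝓝[<] 1)
      (𝓝 (∫ x in a..b, g x * f (z x))) := by
  obtain ⟨C, hC⟩ := (isCompact_closedBall (0 : ℂ) 1).exists_bound_of_continuousOn hf
  have hmem : ∀ r ∈ Icc (0 : ℝ) 1, ∀ x ∈ Ι a b, (r : ℂ) * z x ∈ closedBall (0 : ℂ) 1 := by
    intro r hr x hx
    rw [mem_closedBall_zero_iff, norm_mul, norm_real, Real.norm_of_nonneg hr.1]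
    exact mul_le_one₀ hr.2 (norm_nonneg _) (hz1 x hx)
  have hIcc : Icc (0 : ℝ) 1 ∈ 𝓝[<] 1 :=
    mem_of_superset (Ioo_mem_nhdsLT zero_lt_one) Ioo_subset_Icc_self
  refine intervalIntegral.tendsto_integral_filter_of_dominated_convergence (fun x => ‖g x‖ * C)
    ?_ ?_ (hg.norm.mul_const C) (ae_of_all _ fun x hx => ?_)
  · filter_upwards [hIcc] with r hr
    refine hg.def'.aestronglyMeasurable.mul
      ((hf.comp (continuous_const.mul hz).continuousOn (hmem r hr)).aestronglyMeasurable
        measurableSet_uIoc)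
  · filter_upwards [hIcc] with r hr
    refine ae_of_all _ fun x hx => ?_
    rw [norm_mul]
    gcongr
    exact hC _ (hmem r hr x hx)
  · refine tendsto_const_nhds.mul ((hf _ ?_).tendsto.comp (tendsto_nhdsWithin_iff.2 ⟨?_, ?_⟩))
    · simpa using hz1 x hx
    · simpa using ((continuous_ofReal.tendsto 1).mono_left nhdsWithin_le_nhds).mul_const (z x)
    · filter_upwards [hIcc] with r hr using hmem r hr x hx

theorem integral_exp_two_pi_I_mul {γ : ℝ} (hγ : γ ≠ 0) :
    ∫ x in (-(1 / 2) : ℝ)..(1 / 2), exp (2 * π * I * x * γ) =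
      ((Real.sin (π * γ) / (π * γ) : ℝ) : ℂ) := by
  have hc : 2 * (π : ℂ) * I * γ ≠ 0 := by simp [Real.pi_ne_zero, hγ]
  simp_rw [show ∀ x : ℝ, 2 * (π : ℂ) * I * x * γ = 2 * π * I * γ * x from fun x => by ring]
  rw [integral_exp_mul_complex hc]
  push_cast
  rw [Complex.sin, show 2 * (π : ℂ) * I * γ * (1 / 2) = π * γ * I by ring,
    show 2 * (π : ℂ) * I * γ * -(1 / 2) = -(π * γ * I) by ring]
  field_simp
  ring_nf
  simp only [I_sq]
  ring

theorem integral_exp_two_pi_I_mul_mul_pow {β : ℝ} (hβ : 0 < β) (c : ℂ) (n : ℕ) :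
    ∫ x in (-(1 / 2) : ℝ)..(1 / 2), exp (2 * π * I * x * β) * (c * exp (2 * π * I * x)) ^ n =
      c ^ n * ((-1) ^ n * Real.sin (β * π) / (π * (n + β)) : ℝ) := by
  have hexp : ∀ x : ℝ, exp (2 * π * I * x * β) * (c * exp (2 * π * I * x)) ^ n =
      c ^ n * exp (2 * π * I * x * ((n + β : ℝ) : ℂ)) := by
    intro x
    rw [mul_pow, ← exp_nat_mul, mul_left_comm, ← exp_add]
    push_cast
    ring_nf
  simp_rw [hexp]
  rw [intervalIntegral.integral_const_mul, integral_exp_two_pi_I_mul (by positivity),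
    mul_comm π, add_mul, add_comm, Real.sin_add_nat_mul_pi]

theorem integral_rpow_mul_mul_neg_pow {β : ℝ} (hβ : 0 < β) (c : ℂ) (n : ℕ) :
    ∫ t in (0 : ℝ)..1, ((t ^ (β - 1) : ℝ) : ℂ) * (c * -(t : ℂ)) ^ n =
      c ^ n * ((-1) ^ n / (n + β) : ℝ) := by
  have hpow : ∀ t ∈ Ι (0 : ℝ) 1, ((t ^ (β - 1) : ℝ) : ℂ) * (c * -(t : ℂ)) ^ n =
      (c ^ n * (-1) ^ n) * ((t ^ ((n + β) - 1) : ℝ) : ℂ) := by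
    intro t ht
    rw [uIoc_of_le zero_le_one] at ht
    rw [show (n : ℝ) + β - 1 = n + (β - 1) by ring, Real.rpow_add ht.1, Real.rpow_natCast]
    push_cast
    ring
  rw [intervalIntegral.integral_congr_ae (ae_of_all _ hpow), intervalIntegral.integral_const_mul,
    intervalIntegral.integral_ofReal, integral_rpow (Or.inl (by linarith [n.cast_nonneg (α := ℝ)])),
    sub_add_cancel, Real.zero_rpow (by positivity), Real.one_rpow]
  push_cast
  ring

theorem norm_exp_two_pi_I_mul (x : ℝ) : ‖exp (2 * π * I * x)‖ = 1 := by
  simpa [mul_comm _ I, mul_assoc] using norm_exp_ofReal_mul_I (2 * π * x)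

theorem intervalIntegrable_ofReal_rpow {r : ℝ} (hr : -1 < r) (a b : ℝ) :
    IntervalIntegrable (fun t : ℝ => ((t ^ r : ℝ) : ℂ)) volume a b :=
  intervalIntegrable_iff.2 <| (intervalIntegrable_iff.1 <|
    intervalIntegral.intervalIntegrable_rpow' (a := a) (b := b) hr).ofReal

theorem HasFPowerSeriesOnBall.integral_exp_mul_comp_eq_sin_mul_integral {f : ℂ → ℂ}
    {p : FormalMultilinearSeries ℂ ℂ ℂ} (hp : HasFPowerSeriesOnBall f p 0 1) {β : ℝ} (hβ : 0 < β)
    {r : ℝ≥0} (hr : r < 1) :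
    ∫ x in (-(1 / 2) : ℝ)..(1 / 2), exp (2 * π * I * x * β) * f (r * exp (2 * π * I * x)) =
      ((Real.sin (β * π) / π : ℝ) : ℂ) *
        ∫ t in (0 : ℝ)..1, ((t ^ (β - 1) : ℝ) : ℂ) * f (r * -(t : ℂ)) := by
  have hr1 : (r : ℝ≥0∞) < 1 := by exact_mod_cast hr
  have hA := hp.hasSum_intervalIntegral_mul_pow hr1 (g := fun x => exp (2 * π * I * x * β))
    (z := fun x => r * exp (2 * π * I * x))
    (Continuous.intervalIntegrable (by fun_prop) (-(1 / 2)) (1 / 2)) (by fun_prop)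
    fun x _ => by simp [norm_exp_two_pi_I_mul]
  have hB := hp.hasSum_intervalIntegral_mul_pow hr1 (z := fun t => r * -(t : ℂ))
    (intervalIntegrable_ofReal_rpow (r := β - 1) (by linarith) 0 1) (by fun_prop) fun t ht => by
      rw [uIoc_of_le zero_le_one] at ht
      simpa [abs_of_pos ht.1] using mul_le_of_le_one_right r.2 ht.2
  simp only [integral_exp_two_pi_I_mul_mul_pow hβ, integral_rpow_mul_mul_neg_pow hβ] at hA hB
  rw [← hA.tsum_eq, ← hB.tsum_eq, ← tsum_mul_left]
  refine tsum_congr fun n => ?_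
  have hn : (n : ℂ) + β ≠ 0 := by exact_mod_cast (by positivity : (n : ℝ) + β ≠ 0)
  push_cast
  field_simp

theorem fsharp_neg_eq_sin_mul_integral {f : ℂ → ℂ} (hf_cont : ContinuousOn f (closedBall 0 1))
    (hf_holo : DifferentiableOn ℂ f (ball 0 1)) {β : ℝ} (hβ : 0 < β) :
    fsharp f (-β) = ((Real.sin (β * π) / π : ℝ) : ℂ) *
      ∫ t in (0 : ℝ)..1, ((t ^ (β - 1) : ℝ) : ℂ) * f (-(t : ℂ)) := by
  have hfs : fsharp f (-β) =
      ∫ x in (-(1 / 2) : ℝ)..(1 / 2), exp (2 * π * I * x * β) * f (exp (2 * π * I * x)) := by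
    refine intervalIntegral.integral_congr fun x _ => ?_
    push_cast
    ring_nf
  have hlimA := tendsto_intervalIntegral_mul_comp_ofReal_mul hf_cont
    (g := fun x => exp (2 * π * I * x * β))
    (Continuous.intervalIntegrable (by fun_prop) (-(1 / 2)) (1 / 2)) (by fun_prop)
    fun x _ => (norm_exp_two_pi_I_mul x).le
  have hlimB := tendsto_intervalIntegral_mul_comp_ofReal_mul hf_cont (z := fun t => -(t : ℂ))
    (intervalIntegrable_ofReal_rpow (r := β - 1) (by linarith) 0 1) (by fun_prop)
    fun t ht => by
      rw [uIoc_of_le zero_le_one] at ht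
      simpa [abs_of_pos ht.1] using ht.2
  rw [hfs]
  refine tendsto_nhds_unique hlimA ((hlimB.const_mul _).congr' ?_)
  have hp : HasFPowerSeriesOnBall f (cauchyPowerSeries f 0 (1 : ℝ≥0)) 0 (1 : ℝ≥0) :=
    DiffContOnCl.hasFPowerSeriesOnBall
      ⟨hf_holo, by rwa [NNReal.coe_one, closure_ball _ one_ne_zero]⟩ one_pos
  filter_upwards [Ioo_mem_nhdsLT zero_lt_one] with r hr
  lift r to ℝ≥0 using hr.1.le
  exact (hp.integral_exp_mul_comp_eq_sin_mul_integral hβ (by exact_mod_cast hr.2)).symm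

theorem hasSum_pow_mul_sin_succ_mul {w : ℝ} (hw : |w| < 1) (θ : ℝ) :
    HasSum (fun m : ℕ => w ^ m * Real.sin ((m + 1) * θ))
      (Real.sin θ / (1 - 2 * w * Real.cos θ + w ^ 2)) := by
  set z : ℂ := w * exp (θ * I)
  have hz : ‖z‖ < 1 := by simpa [z, norm_exp_ofReal_mul_I] using hw
  have hgeom := ((hasSum_geometric_of_norm_lt_one hz).mul_left (exp (θ * I))).mapL imCLM
  have hterm : ∀ m : ℕ, (exp (θ * I) * z ^ m).im = w ^ m * Real.sin ((m + 1) * θ) := by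
    intro m
    rw [mul_pow, ← exp_nat_mul, mul_left_comm, ← exp_add,
      show θ * I + (m : ℂ) * (θ * I) = ((m + 1) * θ : ℝ) * I by push_cast; ring, ← ofReal_pow,
      im_ofReal_mul, exp_ofReal_mul_I_im]
  have hsum : (exp (θ * I) * (1 - z)⁻¹).im = Real.sin θ / (1 - 2 * w * Real.cos θ + w ^ 2) := by
    rw [← div_eq_mul_inv, div_im]
    simp only [z, sub_re, sub_im, one_re, one_im, re_ofReal_mul, im_ofReal_mul,
      exp_ofReal_mul_I_re, exp_ofReal_mul_I_im, normSq_apply]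
    have hsc := Real.sin_sq_add_cos_sq θ
    have hden : (1 - w * Real.cos θ) * (1 - w * Real.cos θ) +
        (0 - w * Real.sin θ) * (0 - w * Real.sin θ) = 1 - 2 * w * Real.cos θ + w ^ 2 := by
      linear_combination w ^ 2 * hsc
    rw [hden]
    ring
  simpa only [imCLM_apply, hterm, hsum] using hgeom

theorem hasSum_sin_mul_rpow_mul_rpow {α lam t : ℝ} (hα : 0 < α) (hl : 0 < lam) (ht : 0 < t)
    (hlt : lam * t < 1) :
    HasSum (fun k : ℕ => Real.sin (α * (k + 1) * π) * lam ^ (α * (k + 1)) * t ^ (α * (k + 1) - 1))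
      (lam ^ α * Real.sin (α * π) *
        (t ^ (α - 1) / (1 - 2 * (lam * t) ^ α * Real.cos (α * π) + (lam * t) ^ (2 * α)))) := by
  have hw : |(lam * t) ^ α| < 1 := by
    rw [abs_of_nonneg (by positivity)]
    exact Real.rpow_lt_one (by positivity) hlt hα
  have hsq : (lam * t) ^ (2 * α) = ((lam * t) ^ α) ^ 2 := by
    rw [show 2 * α = α * 2 by ring, Real.rpow_mul (by positivity), Real.rpow_two]
  have hterm : ∀ k : ℕ, lam ^ α * t ^ (α - 1) * (((lam * t) ^ α) ^ k * Real.sin ((k + 1) * (α * π)))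
      = Real.sin (α * (k + 1) * π) * lam ^ (α * (k + 1)) * t ^ (α * (k + 1) - 1) := by
    intro k
    rw [← Real.rpow_mul_natCast (by positivity), Real.mul_rpow hl.le ht.le,
      show α * (k + 1) - 1 = (α - 1) + α * k by ring, show α * (k + 1) = α + α * k by ring,
      Real.rpow_add hl, Real.rpow_add ht, mul_comm α k]
    ring_nf
  rw [hsq, mul_assoc, mul_div_left_comm, ← mul_assoc]
  simpa only [hterm] using (hasSum_pow_mul_sin_succ_mul hw (α * π)).mul_left (lam ^ α * t ^ (α - 1))

theorem hasSum_integral_sin_mul_rpow_mul {α lam : ℝ} (hα : 0 < α) (hl0 : 0 < lam) (hl1 : lam < 1)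
    {h : ℝ → ℂ} (hh : ContinuousOn h (Icc 0 1)) :
    HasSum (fun k : ℕ => ∫ t in (0 : ℝ)..1,
        ((Real.sin (α * (k + 1) * π) * lam ^ (α * (k + 1)) * t ^ (α * (k + 1) - 1) : ℝ) : ℂ) * h t)
      (∫ t in (0 : ℝ)..1, ((lam ^ α * Real.sin (α * π) *
        (t ^ (α - 1) / (1 - 2 * (lam * t) ^ α * Real.cos (α * π) + (lam * t) ^ (2 * α))) : ℝ) : ℂ) *
          h t) := by
  obtain ⟨C, hC⟩ := isCompact_Icc.exists_bound_of_continuousOn hh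
  have hq0 : 0 ≤ lam ^ α := by positivity
  have hq1 : lam ^ α < 1 := Real.rpow_lt_one hl0.le hl1 hα
  refine intervalIntegral.hasSum_integral_of_dominated_convergence
    (fun k t => (lam ^ α) ^ k * (lam ^ α * C * t ^ (α - 1))) (fun k => ?_) (fun k => ?_)
    (ae_of_all _ fun t _ => (summable_geometric_of_lt_one hq0 hq1).mul_right _) ?_
    (ae_of_all _ fun t ht => ?_)
  · refine ContinuousOn.aestronglyMeasurable ?_ measurableSet_uIoc
    rw [uIoc_of_le zero_le_one]
    refine ContinuousOn.mul (continuous_ofReal.comp_continuousOn ?_) (hh.mono Ioc_subset_Icc_self)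
    exact continuousOn_const.mul (continuousOn_id.rpow_const fun t ht => Or.inl ht.1.ne')
  · refine ae_of_all _ fun t ht => ?_
    rw [uIoc_of_le zero_le_one] at ht
    have ht0 : 0 < t := ht.1
    have hexp : α - 1 ≤ α * (k + 1) - 1 := by nlinarith [k.cast_nonneg (α := ℝ)]
    have hpow : lam ^ (α * (k + 1)) = (lam ^ α) ^ k * lam ^ α := by
      rw [← Real.rpow_mul_natCast hl0.le, ← Real.rpow_add hl0]
      ring_nf
    calc _ = |Real.sin (α * (k + 1) * π)| * lam ^ (α * (k + 1)) * t ^ (α * (k + 1) - 1) *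
            ‖h t‖ := by
          rw [norm_mul, norm_real, Real.norm_eq_abs, abs_mul, abs_mul,
            abs_of_pos (by positivity : 0 < lam ^ (α * (k + 1))),
            abs_of_pos (by positivity : 0 < t ^ (α * (k + 1) - 1))]
      _ ≤ 1 * lam ^ (α * (k + 1)) * t ^ (α - 1) * C := by
          gcongr ?_ * _ * ?_ * ?_
          exacts [Real.abs_sin_le_one _, Real.rpow_le_rpow_of_exponent_ge ht0 ht.2 hexp,
            hC t (Ioc_subset_Icc_self ht)]
      _ = _ := by rw [hpow]; ring
  · simp_rw [tsum_mul_right]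
    exact ((intervalIntegral.intervalIntegrable_rpow' (r := α - 1) (by linarith)).const_mul
      (lam ^ α * C)).const_mul _
  · rw [uIoc_of_le zero_le_one] at ht
    exact (hasSum_ofReal.2 (hasSum_sin_mul_rpow_mul_rpow hα hl0 ht.1
      (by nlinarith [ht.1, ht.2]))).mul_right (h t)

/-- The sum `Σ_{j=-∞}^{-1} f^#(αj) λ^{-αj}` is indexed by `j = -(k+1)`, `k ∈ ℕ`. -/
theorem fractional_taylor_negative_part_general (f : ℂ → ℂ)
    (hf_cont : ContinuousOn f (Metric.closedBall 0 1))
    (hf_holo : DifferentiableOn ℂ f (Metric.ball 0 1))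
    (α : ℝ) (hα0 : 0 < α)
    (lam : ℝ) (hl0 : 0 < lam) (hl1 : lam < 1) :
    (α : ℂ) * ∑' k : ℕ, fsharp f (-(α * (k + 1))) * ((lam ^ (α * (k + 1)) : ℝ) : ℂ) =
      ((α * lam ^ α * Real.sin (α * Real.pi) / Real.pi : ℝ) : ℂ) *
        ∫ t in (0:ℝ)..1,
          ((t ^ (α - 1) /
              (1 - 2 * (lam * t) ^ α * Real.cos (α * Real.pi) + (lam * t) ^ (2 * α)) : ℝ) : ℂ) *
            f (-(t : ℂ)) := by
  have hterm : ∀ k : ℕ, fsharp f (-(α * (k + 1))) * ((lam ^ (α * (k + 1)) : ℝ) : ℂ) =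
      (π : ℂ)⁻¹ * ∫ t in (0 : ℝ)..1, ((Real.sin (α * (k + 1) * π) * lam ^ (α * (k + 1)) *
        t ^ (α * (k + 1) - 1) : ℝ) : ℂ) * f (-(t : ℂ)) := by
    intro k
    rw [fsharp_neg_eq_sin_mul_integral hf_cont hf_holo (by positivity),
      ← intervalIntegral.integral_const_mul, ← intervalIntegral.integral_mul_const,
      ← intervalIntegral.integral_const_mul]
    refine intervalIntegral.integral_congr fun t _ => ?_
    push_cast
    ring
  have hsum := hasSum_integral_sin_mul_rpow_mul hα0 hl0 hl1 (h := fun t => f (-(t : ℂ)))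
    (hf_cont.comp (by fun_prop) fun t ht => by simpa [abs_of_nonneg ht.1] using ht.2)
  rw [tsum_congr hterm, tsum_mul_left, hsum.tsum_eq, ← intervalIntegral.integral_const_mul,
    ← intervalIntegral.integral_const_mul, ← intervalIntegral.integral_const_mul]
  refine intervalIntegral.integral_congr fun t _ => ?_
  push_cast
  ring

/-- Fractional order Taylor series, negative index part (Hara–Hino Thm 2.1, eq. (2.5)).
The sum `Σ_{j=-∞}^{-1} f^#(αj) λ^{-αj}` is indexed by `j = -(k+1)`, `k ∈ ℕ`. -/
theorem fractional_taylor_negative_part (f : ℂ → ℂ)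
    (hf_cont : ContinuousOn f (Metric.closedBall 0 1))
    (hf_holo : DifferentiableOn ℂ f (Metric.ball 0 1))
    (α : ℝ) (hα0 : 0 < α) (hα2 : α < 2)
    (lam : ℝ) (hl0 : 0 < lam) (hl1 : lam < 1) :
    (α : ℂ) * ∑' k : ℕ, fsharp f (-(α * (k + 1))) * ((lam ^ (α * (k + 1)) : ℝ) : ℂ) =
      ((α * lam ^ α * Real.sin (α * Real.pi) / Real.pi : ℝ) : ℂ) *
        ∫ t in (0:ℝ)..1,
          ((t ^ (α - 1) /
              (1 - 2 * (lam * t) ^ α * Real.cos (α * Real.pi) + (lam * t) ^ (2 * α)) : ℝ) : ℂ) *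
            f (-(t : ℂ)) :=
  fractional_taylor_negative_part_general f hf_cont hf_holo α hα0 lam hl0 hl1
end

section
/- Let f be continuous on the closed unit disk and holomorphic on the open unit disk, with f^#(ξ) = ∫_{−1/2}^{1/2} f(e^{2πix}) e^{−2πixξ} dx. If 0 < α < 2 and Σ_{j∈ℤ} |f^#(αj)| < ∞, then α · Σ_{j=−∞}^{∞} f^#(αj) = f(1). -/
/-!
Let `g` be `x ↦ f(e^{2πix})` cut off outside the period `(-1/2, 1/2]`, so that `f^#(ξ) = ĝ(ξ)`,
and let `T = 1/α`; the claim is Poisson summation `α ∑ₙ ĝ(αn) = ∑ₖ g(kT)`. The `T`-periodization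
of `g` has Fourier coefficients `α ĝ(αn)`; these are summable, so its Fourier series converges to
it wherever it is continuous. Because `T > 1/2`, no translate `g(· + kT)` with `k ≠ 0` reaches a
neighbourhood of `0`, so near `0` the periodization is `g` itself: continuous, with value
`g 0 = f 1`.
-/

open MeasureTheory Set Filter Topology AddCircle FourierTransform

theorem eq_of_ae_eq_of_continuousAt {X E : Type*} [TopologicalSpace X] [MeasurableSpace X]
    [TopologicalSpace E] [T2Space E] {μ : Measure X} [μ.IsOpenPosMeasure] {f g : X → E} {x : X}
    (h : f =ᵐ[μ] g) (hf : ContinuousAt f x) (hg : ContinuousAt g x) : f x = g x := by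
  by_contra hne
  exact (μ.measure_pos_of_mem_nhds ((hf.ne_iff_eventually_ne hg).mp hne)).ne' (ae_iff.mp h)

namespace AddCircle

variable {T : ℝ} [Fact (0 < T)]

theorem hasSum_fourier_series_of_summable_of_continuousAt {f : AddCircle T → ℂ}
    (hf : MemLp f 2 haarAddCircle) (hsum : Summable (fourierCoeff f)) {x : AddCircle T}
    (hx : ContinuousAt f x) : HasSum (fun n => fourierCoeff f n • fourier n x) (f x) := by
  have hsummable : Summable fun n => fourierCoeff f n • fourier (T := T) n :=
    .of_norm <| by simpa only [norm_smul, fourier_norm, mul_one] using hsum.norm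
  set G : C(AddCircle T, ℂ) := ∑' n, fourierCoeff f n • fourier n
  have hG_Lp : HasSum (fun n => fourierCoeff f n • fourierLp 2 n)
      (ContinuousMap.toLp 2 haarAddCircle ℂ G) := by
    simpa using (ContinuousMap.toLp (E := ℂ) 2 haarAddCircle ℂ).hasSum hsummable.hasSum
  have hf_Lp : HasSum (fun n => fourierCoeff f n • fourierLp 2 n) (hf.toLp f) := by
    simpa only [fourierCoeff_congr_ae hf.coeFn_toLp] using hasSum_fourier_series_L2 (hf.toLp f)
  have hfG : f =ᵐ[haarAddCircle] G :=
    hf.coeFn_toLp.symm.trans <| (hf_Lp.unique hG_Lp) ▸ ContinuousMap.coeFn_toLp haarAddCircle G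
  rw [eq_of_ae_eq_of_continuousAt hfG hx G.continuous.continuousAt]
  exact (ContinuousMap.evalCLM ℂ x).hasSum hsummable.hasSum

end AddCircle

theorem intervalIntegral_periodic_mul_translates {T : ℝ} {g e : ℝ → ℂ}
    (he : Function.Periodic e T) (hh : Integrable fun x => e x * g x) (a : ℝ) :
    ∫ x in a..a + T, e x * (g (x - T) + g x + g (x + T)) =
      ∫ x in a - T..a + 2 * T, e x * g x := by
  set h : ℝ → ℂ := fun x => e x * g x
  calc
    _ = ∫ x in a..a + T, (h (x - T) + h x + h (x + T)) :=
        intervalIntegral.integral_congr fun x _ => by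
          simp only [h, he x, he.sub_eq x]; ring
    _ = (∫ x in a - T..a, h x) + (∫ x in a..a + T, h x) + ∫ x in a + T..a + 2 * T, h x := by
        rw [intervalIntegral.integral_add ((hh.comp_sub_right T).intervalIntegrable.add
            hh.intervalIntegrable) (hh.comp_add_right T).intervalIntegrable,
          intervalIntegral.integral_add (hh.comp_sub_right T).intervalIntegrable
            hh.intervalIntegrable,
          intervalIntegral.integral_comp_sub_right, intervalIntegral.integral_comp_add_right]
        ring_nf
    _ = ∫ x in a - T..a + 2 * T, h x := by
        rw [intervalIntegral.integral_add_adjacent_intervals hh.intervalIntegrable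
            hh.intervalIntegrable,
          intervalIntegral.integral_add_adjacent_intervals hh.intervalIntegrable
            hh.intervalIntegrable]

/-- The `T`-periodization `∑ₖ g (x + k T)` of a `g` supported in `[-b, b]` with `b < T`: on the
window `(-T/2, T/2]` only the translates by `-T`, `0`, `T` can be nonzero. -/
noncomputable def periodization (T : ℝ) [Fact (0 < T)] (g : ℝ → ℂ) : AddCircle T → ℂ :=
  liftIoc T (-(T / 2)) fun x => g (x - T) + g x + g (x + T)

section Periodization

variable {T b : ℝ} [Fact (0 < T)] {g : ℝ → ℂ}

theorem fourierCoeff_periodization (hg : Integrable g)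
    (hsupp : Function.support g ⊆ Icc (-b) b) (hbT : b < T) (n : ℤ) :
    fourierCoeff (periodization T g) n = (T : ℂ)⁻¹ * 𝓕 g (n / T) := by
  have hT : 0 < T := Fact.out
  set a := -(T / 2) with ha
  set e : ℝ → ℂ := fun x => fourier (-n) (x : AddCircle T)
  set h : ℝ → ℂ := fun x => e x * g x
  have hh : Integrable h := hg.bdd_mul (c := 1)
    ((map_continuous _).comp (AddCircle.continuous_mk' T)).aestronglyMeasurable
    (.of_forall fun x => by simp only [e, fourier_apply, Circle.norm_coe, le_refl])
  have hperiodic : Function.Periodic e T := fun x => by simp only [e, coe_add_period]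
  have hfull : ∫ x in a - T..a + 2 * T, h x = ∫ x, h x := by
    rw [intervalIntegral.integral_of_le (by linarith)]
    refine setIntegral_eq_integral_of_forall_compl_eq_zero fun x hx => ?_
    have : g x = 0 := Function.notMem_support.mp fun hgx => hx <| by
      obtain ⟨h₁, h₂⟩ := hsupp hgx
      constructor <;> linarith [ha]
    simp only [h, this, mul_zero]
  calc fourierCoeff (periodization T g) n
      = (1 / T : ℝ) • ∫ x in a..a + T, e x * (g (x - T) + g x + g (x + T)) := by
        rw [fourierCoeff_eq_intervalIntegral _ _ a]
        congr 1
        refine intervalIntegral.integral_congr_ae (.of_forall fun x hx => ?_)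
        rw [uIoc_of_le (by linarith)] at hx
        rw [periodization, liftIoc_coe_apply (a := -(T / 2)) hx, smul_eq_mul]
    _ = (T : ℂ)⁻¹ * 𝓕 g (n / T) := by
        rw [intervalIntegral_periodic_mul_translates hperiodic hh, hfull,
          Real.fourier_real_eq_integral_exp_smul, Complex.real_smul]
        push_cast
        congr 1
        · exact one_div _
        refine integral_congr_ae (.of_forall fun x => ?_)
        simp only [h, e, fourier_coe_apply, smul_eq_mul]
        congr 2
        push_cast
        ring

theorem memLp_periodization (hg : MemLp g ⊤) : MemLp (periodization T g) 2 haarAddCircle := by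
  have hP : MemLp (fun x => g (x - T) + g x + g (x + T)) ⊤ :=
    ((hg.comp_measurePreserving (measurePreserving_sub_right volume T)).add hg).add
      (hg.comp_measurePreserving (measurePreserving_add_right volume T))
  exact ((hP.restrict _).mono_exponent le_top).memLp_liftIoc.haarAddCircle

theorem periodization_coe_eventuallyEq (hsupp : Function.support g ⊆ Icc (-b) b) (hbT : b < T) :
    (fun x : ℝ => periodization T g x) =ᶠ[𝓝 0] g := by
  have hT : 0 < T := Fact.out
  have hzero : ∀ x ∉ Icc (-b) b, g x = 0 := fun x hx =>
    Function.notMem_support.mp fun hgx => hx (hsupp hgx)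
  filter_upwards [Ioo_mem_nhds (show -(T / 2) < 0 by linarith) (show 0 < T / 2 by linarith),
    Ioo_mem_nhds (show b - T < 0 by linarith) (show 0 < T - b by linarith)] with x hx hxb
  have hwindow : x ∈ Ioc (-(T / 2)) (-(T / 2) + T) := ⟨hx.1, by linarith [hx.2]⟩
  rw [periodization, liftIoc_coe_apply hwindow, hzero (x - T) fun h => by linarith [h.1, hxb.2],
    hzero (x + T) fun h => by linarith [h.2, hxb.1], zero_add, add_zero]

theorem periodization_zero (hsupp : Function.support g ⊆ Icc (-b) b) (hbT : b < T) :
    periodization T g 0 = g 0 := by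
  simpa using (periodization_coe_eventuallyEq hsupp hbT).eq_of_nhds

theorem continuousAt_periodization_zero (hsupp : Function.support g ⊆ Icc (-b) b) (hbT : b < T)
    (hg : ContinuousAt g 0) : ContinuousAt (periodization T g) 0 :=
  QuotientAddGroup.isOpenQuotientMap_mk.continuousAt_comp_iff.mp
    (hg.congr (periodization_coe_eventuallyEq hsupp hbT).symm)

theorem hasSum_inv_mul_fourier_int_div (hg : MemLp g ⊤)
    (hsupp : Function.support g ⊆ Icc (-b) b) (hbT : b < T) (hg0 : ContinuousAt g 0)
    (hsum : Summable fun n : ℤ => 𝓕 g (n / T)) :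
    HasSum (fun n : ℤ => (T : ℂ)⁻¹ * 𝓕 g (n / T)) (g 0) := by
  have hg_int : Integrable g :=
    (integrableOn_iff_integrable_of_support_subset hsupp).mp ((hg.restrict _).integrable le_top)
  have hcoeff := fourierCoeff_periodization hg_int hsupp hbT
  have hcoeff_sum : Summable (fourierCoeff (periodization T g)) := by
    rw [funext hcoeff]
    exact hsum.mul_left _
  simpa only [hcoeff, fourier_eval_zero, smul_eq_mul, mul_one, periodization_zero hsupp hbT] using
    hasSum_fourier_series_of_summable_of_continuousAt (memLp_periodization hg) hcoeff_sum
      (continuousAt_periodization_zero hsupp hbT hg0)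

end Periodization

noncomputable def periodCutoff (f : ℂ → ℂ) : ℝ → ℂ :=
  (Ioc (-(1 / 2) : ℝ) (1 / 2)).indicator fun x => f (Complex.exp (2 * Real.pi * Complex.I * x))

section periodCutoff

variable {f : ℂ → ℂ}

theorem fsharp_eq_fourier_periodCutoff (ξ : ℝ) : fsharp f ξ = 𝓕 (periodCutoff f) ξ := by
  rw [fsharp, intervalIntegral.integral_of_le (by norm_num), Real.fourier_real_eq_integral_exp_smul,
    ← integral_indicator measurableSet_Ioc]
  congr 1 with x
  by_cases hx : x ∈ Ioc (-(1 / 2) : ℝ) (1 / 2)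
  · simp only [periodCutoff, indicator_of_mem hx, smul_eq_mul, mul_comm (f _)]
    congr 2
    push_cast
    ring
  · simp only [periodCutoff, indicator_of_notMem hx, smul_zero]

theorem periodCutoff_zero : periodCutoff f 0 = f 1 := by
  simp [periodCutoff]

theorem support_periodCutoff_subset :
    Function.support (periodCutoff f) ⊆ Icc (-(1 / 2)) (1 / 2) :=
  support_indicator_subset.trans Ioc_subset_Icc_self

theorem exp_two_pi_I_mul_mem_closedBall (x : ℝ) :
    Complex.exp (2 * Real.pi * Complex.I * x) ∈ Metric.closedBall (0 : ℂ) 1 := by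
  simp [Complex.norm_exp]

theorem continuous_comp_exp_two_pi_I (hf : ContinuousOn f (Metric.closedBall 0 1)) :
    Continuous fun x : ℝ => f (Complex.exp (2 * Real.pi * Complex.I * x)) :=
  hf.comp_continuous (by fun_prop) exp_two_pi_I_mul_mem_closedBall

theorem memLp_top_periodCutoff (hf : ContinuousOn f (Metric.closedBall 0 1)) :
    MemLp (periodCutoff f) ⊤ := by
  obtain ⟨C, hC⟩ := (isCompact_closedBall (0 : ℂ) 1).exists_bound_of_continuousOn hf
  refine memLp_top_of_bound
    ((continuous_comp_exp_two_pi_I hf).aestronglyMeasurable.indicator measurableSet_Ioc) C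
    (.of_forall fun x => (norm_indicator_le_norm_self _ x).trans ?_)
  exact hC _ (exp_two_pi_I_mul_mem_closedBall x)

theorem continuousAt_periodCutoff_zero (hf : ContinuousOn f (Metric.closedBall 0 1)) :
    ContinuousAt (periodCutoff f) 0 :=
  (continuous_comp_exp_two_pi_I hf).continuousAt.congr <| by
    filter_upwards [Ioc_mem_nhds (show -(1 / 2) < (0 : ℝ) by norm_num)
      (show (0 : ℝ) < 1 / 2 by norm_num)] with x hx
    simp only [periodCutoff, indicator_of_mem hx]

end periodCutoff

theorem fractional_taylor_at_one_general (f : ℂ → ℂ)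
    (hf_cont : ContinuousOn f (Metric.closedBall 0 1))
    (α : ℝ) (hα0 : 0 < α) (hα2 : α < 2)
    (hsum : Summable (fun j : ℤ => ‖fsharp f (α * j)‖)) :
    (α : ℂ) * ∑' j : ℤ, fsharp f (α * j) = f 1 := by
  have : Fact (0 < α⁻¹) := ⟨inv_pos.mpr hα0⟩
  have hbT : (1 / 2 : ℝ) < α⁻¹ := by rw [lt_inv_comm₀ (by norm_num) hα0]; norm_num [hα2]
  have hfsharp (n : ℤ) : 𝓕 (periodCutoff f) (n / α⁻¹) = fsharp f (α * n) := by
    rw [fsharp_eq_fourier_periodCutoff, div_inv_eq_mul, mul_comm]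
  have hpoisson := hasSum_inv_mul_fourier_int_div (memLp_top_periodCutoff hf_cont)
    support_periodCutoff_subset hbT (continuousAt_periodCutoff_zero hf_cont)
    (by simpa only [hfsharp] using hsum.of_norm)
  simp only [hfsharp, Complex.ofReal_inv, inv_inv] at hpoisson
  rw [← tsum_mul_left, hpoisson.tsum_eq, periodCutoff_zero]

/-- `α Σ_{j∈ℤ} f^#(αj) = f(1)` under absolute summability. -/
theorem fractional_taylor_at_one (f : ℂ → ℂ)
    (hf_cont : ContinuousOn f (Metric.closedBall 0 1))
    (hf_holo : DifferentiableOn ℂ f (Metric.ball 0 1))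
    (α : ℝ) (hα0 : 0 < α) (hα2 : α < 2)
    (hsum : Summable (fun j : ℤ => ‖fsharp f (α * j)‖)) :
    (α : ℂ) * ∑' j : ℤ, fsharp f (α * j) = f 1 :=
  fractional_taylor_at_one_general f hf_cont α hα0 hα2 hsum
end

section
/- For α ∈ (0,1) and λ ∈ (0,1], one has (1+λ)^α − α(1+λ^α) < 1 − α, with the decomposition (1+λ)^α − α(1+λ^α) = [(1+λ)^α − (1+αλ)] + α(λ − λ^α) + (1−α), where the first bracket is < 0 by strict concavity of λ ↦ (1+λ)^α and the second term is ≤ 0. -/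
/-- The elementary inequality used to bound `R(α,1,λ)`, with its decomposition. -/
theorem key_elementary_inequality (α : ℝ) (hα0 : 0 < α) (hα1 : α < 1)
    (lam : ℝ) (hl0 : 0 < lam) (hl1 : lam ≤ 1) :
    (1 + lam) ^ α - α * (1 + lam ^ α) < 1 - α ∧
    (1 + lam) ^ α - α * (1 + lam ^ α) =
      ((1 + lam) ^ α - (1 + α * lam)) + α * (lam - lam ^ α) + (1 - α) ∧
    (1 + lam) ^ α - (1 + α * lam) < 0 ∧
    α * (lam - lam ^ α) ≤ 0 := by
  have hdecomp : (1 + lam) ^ α - α * (1 + lam ^ α) =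
      ((1 + lam) ^ α - (1 + α * lam)) + α * (lam - lam ^ α) + (1 - α) := by ring
  have hconcave : (1 + lam) ^ α - (1 + α * lam) < 0 :=
    sub_neg.mpr (rpow_one_add_lt_one_add_mul_self (by linarith) hl0.ne' hα0 hα1)
  have hpow : α * (lam - lam ^ α) ≤ 0 :=
    mul_nonpos_of_nonneg_of_nonpos hα0.le
      (sub_nonpos.mpr (Real.self_le_rpow_of_le_one hl0.le hl1 hα1.le))
  exact ⟨by linarith, hdecomp, hconcave, hpow⟩
end
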